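/- Let σ_1 ≥ ... ≥ σ_n > 0 be positive reals, s ≥ 1, and suppose there is a partition of {1,...,n} into groups of sizes ℓ_1, ..., ℓ_s such that each σ in group i satisfies σ ≥ C_i Δ^{i-1} for constants C_i > 0 independent of Δ ∈ (0,1), and suppose also ∏_{k=1}^n σ_k = C · Δ^{Σ_{i=1}^s ℓ_i(i-1)} with C > 0 independent of Δ. Then each σ in group i additionally satisfies σ ≤ C'_i Δ^{i-1} for some constant C'_i > 0 independent of Δ, i.e., σ ≍ Δ^{i-1}. -/
import Mathlib


open Finset

theorem singular_value_squeeze (n s : ℕ) (Δ0 : ℝ) (hΔ0 : 0 < Δ0)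
    (σ : ℝ → Fin n → ℝ) (g : Fin n → Fin s)
    (C : Fin s → ℝ) (hC : ∀ i, 0 < C i) (Cp : ℝ) (hCp : 0 < Cp)
    (hpos : ∀ Δ ∈ Set.Ioc (0 : ℝ) Δ0, ∀ k, 0 < σ Δ k)
    (hlow : ∀ Δ ∈ Set.Ioc (0 : ℝ) Δ0, ∀ k, C (g k) * Δ ^ (g k : ℕ) ≤ σ Δ k)
    (hprod : ∀ Δ ∈ Set.Ioc (0 : ℝ) Δ0,
      ∏ k : Fin n, σ Δ k =
        Cp * Δ ^ (∑ i : Fin s, (Finset.univ.filter (fun k => g k = i)).card * (i : ℕ))) :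
    ∃ C' : Fin s → ℝ, (∀ i, 0 < C' i) ∧
      ∀ Δ ∈ Set.Ioc (0 : ℝ) Δ0, ∀ k, σ Δ k ≤ C' (g k) * Δ ^ (g k : ℕ) := by
  set F : ℝ := ∏ j : Fin n, C (g j) with hFdef
  have hFpos : 0 < F := Finset.prod_pos fun j _ => hC (g j)
  refine ⟨fun i => Cp * C i / F, fun i => div_pos (mul_pos hCp (hC i)) hFpos, ?_⟩
  intro Δ hΔ k
  have hΔpos : 0 < Δ := hΔ.1
  -- the exponent is the sum of the g j's
  have hsum : (∑ i : Fin s, (Finset.univ.filter (fun k => g k = i)).card * (i : ℕ))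
      = ∑ j : Fin n, (g j : ℕ) := by
    rw [← Finset.sum_fiberwise_of_maps_to (fun j _ => Finset.mem_univ (g j))
      (fun j => (g j : ℕ))]
    refine Finset.sum_congr rfl fun i _ => ?_
    rw [Finset.sum_congr rfl (fun j hj => by rw [(Finset.mem_filter.mp hj).2]),
      Finset.sum_const, smul_eq_mul]
  set E : ℕ := ∑ j : Fin n, (g j : ℕ) with hEdef
  set L : ℝ := ∏ j ∈ Finset.univ.erase k, (C (g j) * Δ ^ (g j : ℕ)) with hLdef
  have hLpos : 0 < L := Finset.prod_pos fun j _ => mul_pos (hC _) (pow_pos hΔpos _)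
  have hL_le : L ≤ ∏ j ∈ Finset.univ.erase k, σ Δ j :=
    Finset.prod_le_prod (fun j _ => (mul_pos (hC _) (pow_pos hΔpos _)).le) (fun j _ => hlow Δ hΔ j)
  have key : σ Δ k * L ≤ Cp * Δ ^ E := by
    calc σ Δ k * L ≤ σ Δ k * ∏ j ∈ Finset.univ.erase k, σ Δ j := by
          exact mul_le_mul_of_nonneg_left hL_le (hpos Δ hΔ k).le
      _ = ∏ j : Fin n, σ Δ j := (Finset.mul_prod_erase _ _ (Finset.mem_univ k))
      _ = Cp * Δ ^ E := by rw [hprod Δ hΔ, hsum]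
  have hLeq : (Cp * C (g k) / F * Δ ^ (g k : ℕ)) * L = Cp * Δ ^ E := by
    have hL : L = (∏ j ∈ Finset.univ.erase k, C (g j))
        * Δ ^ (∑ j ∈ Finset.univ.erase k, (g j : ℕ)) := by
      rw [hLdef, Finset.prod_mul_distrib, Finset.prod_pow_eq_pow_sum]
    have hCF : C (g k) * ∏ j ∈ Finset.univ.erase k, C (g j) = F := by
      rw [hFdef]; exact Finset.mul_prod_erase Finset.univ (fun j => C (g j)) (Finset.mem_univ k)
    have hEsplit : (g k : ℕ) + ∑ j ∈ Finset.univ.erase k, (g j : ℕ) = E := by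
      rw [hEdef]; exact Finset.add_sum_erase Finset.univ (fun j => ((g j : ℕ))) (Finset.mem_univ k)
    have hP : (0:ℝ) < ∏ j ∈ Finset.univ.erase k, C (g j) :=
      Finset.prod_pos fun j _ => hC (g j)
    rw [hL, ← hEsplit, pow_add, ← hCF]
    field_simp [(hC (g k)).ne', hP.ne']
  calc σ Δ k = σ Δ k * L / L := by field_simp
    _ ≤ (Cp * Δ ^ E) / L := by exact div_le_div_of_nonneg_right key hLpos.le
    _ = Cp * C (g k) / F * Δ ^ (g k : ℕ) := by
        rw [← hLeq]; field_simp
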